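/- For any finite simple undirected graph in which every vertex has degree at least 1, the local mean is at least the mean degree, μ_L ≥ μ_D, with equality if and only if every edge of the graph joins two vertices of equal degree. -/
import Mathlib


open Finset

variable {V : Type*}

/-- Set of neighbors of `v` as a `Finset` (classical). -/
noncomputable def nbr (G : SimpleGraph V) [Fintype V] (v : V) : Finset V :=
  haveI := Classical.decRel G.Adj
  G.neighborFinset v

/-- Degree of vertex `v`: number of its neighbors. -/
noncomputable def deg (G : SimpleGraph V) [Fintype V] (v : V) : ℕ :=
  (nbr G v).card

/-- Average degree of the friends of `v`. -/
noncomputable def friendAvg (G : SimpleGraph V) [Fintype V] (v : V) : ℝ :=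
  (∑ j ∈ nbr G v, (deg G j : ℝ)) / (deg G v : ℝ)

/-- Mean degree of the network. -/
noncomputable def meanDeg (G : SimpleGraph V) [Fintype V] : ℝ :=
  (∑ i : V, (deg G i : ℝ)) / (Fintype.card V : ℝ)

/-- Local mean: average over vertices of the average friend degree. -/
noncomputable def localMean (G : SimpleGraph V) [Fintype V] : ℝ :=
  (∑ i : V, friendAvg G i) / (Fintype.card V : ℝ)

/-- Global mean: total number of friends of friends over total number of friends. -/
noncomputable def globalMean (G : SimpleGraph V) [Fintype V] : ℝ :=
  (∑ i : V, ∑ j ∈ nbr G i, (deg G j : ℝ)) / (∑ i : V, (deg G i : ℝ))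

/-- Number of (undirected) edges. -/
noncomputable def edgeCount (G : SimpleGraph V) [Fintype V] : ℕ :=
  Nat.card G.edgeSet

/-- m-th moment of the degree distribution. -/
noncomputable def kappa (G : SimpleGraph V) [Fintype V] (m : ℤ) : ℝ :=
  (∑ i : V, (deg G i : ℝ) ^ m) / (Fintype.card V : ℝ)

lemma nbr_mem_iff (G : SimpleGraph V) [Fintype V] {i j : V} :
    j ∈ nbr G i ↔ G.Adj i j := by
  simp [nbr]

lemma nbr_comm (G : SimpleGraph V) [Fintype V] {i j : V} :
    j ∈ nbr G i ↔ i ∈ nbr G j := by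
  rw [nbr_mem_iff, nbr_mem_iff, SimpleGraph.adj_comm]

lemma swap_sum (G : SimpleGraph V) [Fintype V] (f : V → V → ℝ) :
    ∑ i : V, ∑ j ∈ nbr G i, f i j = ∑ i : V, ∑ j ∈ nbr G i, f j i := by
  classical
  have h1 : ∀ (g : V → V → ℝ), ∑ i : V, ∑ j ∈ nbr G i, g i j
      = ∑ i : V, ∑ j : V, if j ∈ nbr G i then g i j else 0 := by
    intro g
    refine Finset.sum_congr rfl fun i _ => ?_
    rw [Finset.sum_ite_mem, Finset.univ_inter]
  rw [h1, h1, Finset.sum_comm]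
  refine Finset.sum_congr rfl fun j _ => Finset.sum_congr rfl fun i _ => ?_
  by_cases h : j ∈ nbr G i
  · rw [if_pos h, if_pos ((nbr_comm G).mp h)]
  · rw [if_neg h, if_neg (fun h' => h ((nbr_comm G).mpr h'))]

/-- For any finite simple undirected graph in which every vertex has degree at least 1,
the local mean is at least the mean degree, with equality iff every edge joins two
vertices of equal degree. -/
theorem stmt5 {V : Type*} [Fintype V] [Nonempty V] (G : SimpleGraph V)
    (hdeg : ∀ v : V, 1 ≤ deg G v) :
    meanDeg G ≤ localMean G ∧
      (localMean G = meanDeg G ↔ ∀ i j : V, G.Adj i j → deg G i = deg G j) := by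
  classical
  set d : V → ℝ := fun v => (deg G v : ℝ) with hdDef
  have hd : ∀ v, 0 < d v := fun v => by
    have h := hdeg v
    simp only [hdDef]
    exact_mod_cast Nat.lt_of_lt_of_le Nat.zero_lt_one h
  have hdne : ∀ v, d v ≠ 0 := fun v => (hd v).ne'
  set T : ℝ := ∑ i : V, ∑ j ∈ nbr G i, (d j / d i - 1) with hT
  have hF : ∀ i, friendAvg G i = ∑ j ∈ nbr G i, d j / d i := by
    intro i; unfold friendAvg; rw [Finset.sum_div]
  have hDi : ∀ i : V, d i = ∑ j ∈ nbr G i, (1 : ℝ) := by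
    intro i; simp [hdDef, deg]
  have hTdiff : T = (∑ i : V, friendAvg G i) - ∑ i : V, d i := by
    rw [hT, ← Finset.sum_sub_distrib]
    refine Finset.sum_congr rfl fun i _ => ?_
    rw [hF, Finset.sum_sub_distrib]
    congr 1
    exact (hDi i).symm
  have h2T : 2 * T = ∑ i : V, ∑ j ∈ nbr G i, ((d i - d j) ^ 2 / (d i * d j)) := by
    have hswap : T = ∑ i : V, ∑ j ∈ nbr G i, (d i / d j - 1) :=
      swap_sum G (fun i j => d j / d i - 1)
    calc 2 * T = T + T := by ring
      _ = ∑ i : V, ∑ j ∈ nbr G i, ((d j / d i - 1) + (d i / d j - 1)) := by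
          nth_rewrite 2 [hswap]
          rw [hT, ← Finset.sum_add_distrib]
          exact Finset.sum_congr rfl fun i _ => (Finset.sum_add_distrib).symm
      _ = ∑ i : V, ∑ j ∈ nbr G i, ((d i - d j) ^ 2 / (d i * d j)) := by
          refine Finset.sum_congr rfl fun i _ => Finset.sum_congr rfl fun j _ => ?_
          have h1 := hdne i
          have h2 := hdne j
          field_simp
          ring
  have hterm_nonneg : ∀ i : V, ∀ j ∈ nbr G i, 0 ≤ (d i - d j) ^ 2 / (d i * d j) := by
    intro i j _
    have h1 := hd i
    have h2 := hd j
    positivity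
  have hTnonneg : 0 ≤ T := by
    nlinarith [h2T, Finset.sum_nonneg (fun i (_ : i ∈ Finset.univ) =>
      Finset.sum_nonneg (hterm_nonneg i))]
  have hNpos : (0 : ℝ) < (Fintype.card V : ℝ) := by
    exact_mod_cast Fintype.card_pos
  have hsumle : ∑ i : V, d i ≤ ∑ i : V, friendAvg G i := by linarith [hTdiff.symm.le, hTnonneg]
  constructor
  · unfold meanDeg localMean
    gcongr
  · constructor
    · intro heq
      have hsum : (∑ i : V, friendAvg G i) = ∑ i : V, d i := by
        unfold localMean meanDeg at heq
        field_simp at heq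
        exact heq
      have hT0 : T = 0 := by rw [hTdiff, hsum]; ring
      have h2T0 : (∑ i : V, ∑ j ∈ nbr G i, ((d i - d j) ^ 2 / (d i * d j))) = 0 := by
        rw [← h2T, hT0]; ring
      have hinner := (Finset.sum_eq_zero_iff_of_nonneg (fun i _ =>
        Finset.sum_nonneg (hterm_nonneg i))).mp h2T0
      intro i j hadj
      have hij : j ∈ nbr G i := (nbr_mem_iff G).mpr hadj
      have hz := (Finset.sum_eq_zero_iff_of_nonneg (hterm_nonneg i)).mp
        (hinner i (Finset.mem_univ i)) j hij
      have hdenom : d i * d j ≠ 0 := mul_ne_zero (hdne i) (hdne j)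
      have hsq : (d i - d j) ^ 2 = 0 := by
        rcases div_eq_zero_iff.mp hz with h | h
        · exact h
        · exact absurd h hdenom
      have h3 : d i = d j := by nlinarith [sq_nonneg (d i - d j)]
      simp only [hdDef] at h3
      exact_mod_cast h3
    · intro hadjdeg
      have hT0 : T = 0 := by
        have heach : ∀ i : V, ∀ j ∈ nbr G i, (d i - d j) ^ 2 / (d i * d j) = 0 := by
          intro i j hij
          have : deg G i = deg G j := hadjdeg i j ((nbr_mem_iff G).mp hij)
          have hdij : d i = d j := by simp [hdDef, this]
          rw [hdij]; simp
        have : (2 : ℝ) * T = 0 := by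
          rw [h2T]
          exact Finset.sum_eq_zero fun i _ => Finset.sum_eq_zero (heach i)
        linarith
      have : (∑ i : V, friendAvg G i) = ∑ i : V, d i := by
        have := hTdiff.symm
        rw [hT0] at this
        linarith
      unfold localMean meanDeg
      rw [this]
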